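/- For all k ≥ 2 and n ≥ k − 1, ∑_{j=1}^k (−α)^j · ŵ_α(k,j) · (n+j)! = (−α)^k · n!·(n+1)!/(n−k+1)!. -/

import Mathlib

open Finset

/-!
Since `L(k,j)·j! = C(k-1,j-1)·k!` and `(n+j)! = C(n+j,n)·n!·j!`, the sum equals
`α^k·k!·n!·∑_j (-1)^j C(k-1,j-1) C(n+j,n)`. The remaining alternating sum is a `(k-1)`-st forward
difference of `x ↦ C(x,n)`, which lowers the lower index by `k-1`; it equals
`(-1)^k C(n+1,k)`, and `k!·C(n+1,k) = (n+1)!/(n+1-k)!`.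
-/

/-- The unsigned Lah numbers. -/
def lah (n k : ℕ) : ℕ :=
  if k = 0 then (if n = 0 then 1 else 0)
  else (n - 1).choose (k - 1) * (n.factorial / k.factorial)

/-- The translated Whitney-Lah numbers `ŵ_α(n,k) = α^{n-k}·L(n,k)`. -/
def whitneyLah (α : ℝ) (n k : ℕ) : ℝ := α ^ (n - k) * (lah n k : ℝ)

theorem sum_range_neg_one_pow_mul_choose_mul_choose_add (m j N : ℕ) :
    ∑ i ∈ range (m + 1), (-1 : ℤ) ^ (m - i) * m.choose i * (N + i).choose (m + j) = N.choose j := by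
  have h := congr_fun (fwdDiff_iter_choose j m) N
  rw [fwdDiff_iter_eq_sum_shift] at h
  simpa [smul_eq_mul] using h

theorem sum_Icc_neg_one_pow_mul_choose_mul_choose {k n : ℕ} (hk : 1 ≤ k) (hkn : k ≤ n + 1) :
    ∑ j ∈ Icc 1 k, (-1 : ℤ) ^ j * ((k - 1).choose (j - 1) * (n + j).choose n) =
      (-1) ^ k * (n + 1).choose k := by
  obtain ⟨m, rfl⟩ := Nat.exists_eq_add_of_le' hk
  obtain ⟨d, rfl⟩ := Nat.exists_eq_add_of_le (Nat.le_of_add_le_add_right hkn)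
  have hsign : ∀ i ∈ range (m + 1), (-1 : ℤ) ^ (i + 1) = (-1) ^ (m + 1) * (-1) ^ (m - i) := by
    intro i hi
    have hm : (-1 : ℤ) ^ (m + 1) = (-1) ^ (i + 1) * (-1) ^ (m - i) := by
      rw [← pow_add]
      congr 1
      rw [mem_range] at hi
      omega
    rw [hm, mul_assoc, ← pow_add, Even.neg_one_pow ⟨m - i, rfl⟩, mul_one]
  rw [show Icc 1 (m + 1) = (Icc 0 m).map (addRightEmbedding 1) by simp, sum_map,
    ← Nat.range_succ_eq_Icc_zero, Nat.choose_symm_of_eq_add (show m + d + 1 = m + 1 + d by ring),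
    ← sum_range_neg_one_pow_mul_choose_mul_choose_add m d (m + d + 1), mul_sum]
  refine sum_congr rfl fun i hi => ?_
  simp only [addRightEmbedding_apply, Nat.add_sub_cancel]
  rw [hsign i hi, show m + d + (i + 1) = m + d + 1 + i by ring]
  ring

theorem lah_mul_factorial {k j : ℕ} (hj : j ≠ 0) (hjk : j ≤ k) :
    lah k j * j.factorial = (k - 1).choose (j - 1) * k.factorial := by
  rw [lah, if_neg hj, mul_assoc, Nat.div_mul_cancel (Nat.factorial_dvd_factorial hjk)]

theorem lah_mul_factorial_add {k j : ℕ} (hj : j ≠ 0) (hjk : j ≤ k) (n : ℕ) :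
    lah k j * (n + j).factorial =
      (k - 1).choose (j - 1) * (n + j).choose n * (k.factorial * n.factorial) := by
  rw [← Nat.add_choose_mul_factorial_mul_factorial n j, ← Nat.choose_symm_add]
  calc lah k j * ((n + j).choose n * n.factorial * j.factorial)
      = lah k j * j.factorial * ((n + j).choose n * n.factorial) := by ring
    _ = _ := by rw [lah_mul_factorial hj hjk]; ring

theorem neg_pow_mul_whitneyLah_mul_factorial (α : ℝ) {k j : ℕ} (hj : j ≠ 0) (hjk : j ≤ k)
    (n : ℕ) : (-α) ^ j * whitneyLah α k j * (n + j).factorial =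
      α ^ k * k.factorial * n.factorial *
        ((-1) ^ j * ((k - 1).choose (j - 1) * (n + j).choose n)) := by
  have h := congrArg (Nat.cast : ℕ → ℝ) (lah_mul_factorial_add hj hjk n)
  push_cast at h
  calc (-α) ^ j * whitneyLah α k j * (n + j).factorial
      = (-1) ^ j * (α ^ j * α ^ (k - j)) * (lah k j * (n + j).factorial) := by
        rw [whitneyLah, neg_pow]; ring
    _ = _ := by rw [← pow_add, Nat.add_sub_cancel' hjk, h]; ring

/-- For all `k ≥ 2` and `n ≥ k − 1`,
`∑_{j=1}^k (−α)^j · ŵ_α(k,j) · (n+j)! = (−α)^k · n!·(n+1)!/(n−k+1)!`. -/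
theorem whitneyLah_alternating_sum (α : ℝ) (k n : ℕ) (hk : 2 ≤ k) (hn : k - 1 ≤ n) :
    ∑ j ∈ Finset.Icc 1 k, (-α) ^ j * whitneyLah α k j * ((n + j).factorial : ℝ) =
      (-α) ^ k * (n.factorial : ℝ) * ((n + 1).factorial : ℝ) /
        ((n + 1 - k).factorial : ℝ) := by
  have hkn : k ≤ n + 1 := by omega
  have hsum := congrArg (Int.cast : ℤ → ℝ)
    (sum_Icc_neg_one_pow_mul_choose_mul_choose (by omega : 1 ≤ k) hkn)
  push_cast at hsum
  rw [sum_congr rfl fun j hj ↦ neg_pow_mul_whitneyLah_mul_factorial α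
      (by grind) (mem_Icc.1 hj).2 n, ← mul_sum, hsum,
    ← Nat.choose_mul_factorial_mul_factorial hkn]
  push_cast
  field_simp
  ring
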